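/- arXiv:2003.06679 — 7 statements merged into one kernel-verified Lean document; each statement's English description precedes it below -/
import Mathlib

section
/- If the digraph G with Laplacian L (row sums zero, nonnegative off-diagonal weights negated) has a directed path from the source node s to every other node, then the pinned Laplacian K (obtained from L by deleting the row and column of s) is invertible. -/
/-- If the digraph (with nonnegative weights `w`, Laplacian `L` with row sums zero)
has a directed path from the source node `s` to every node, then the pinned Laplacian `K`
(obtained from `L` by deleting the row and column of `s`) is invertible. -/
theorem stmt_0 (n : ℕ) (w : Fin (n + 1) → Fin (n + 1) → ℝ)
    (hw : ∀ i k, 0 ≤ w i k) (hwdiag : ∀ i, w i i = 0)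
    (L : Matrix (Fin (n + 1)) (Fin (n + 1)) ℝ)
    (hL : ∀ i k, L i k = if k = i then ∑ m, w i m else -w i k)
    (s : Fin (n + 1))
    (hreach : ∀ i : Fin (n + 1), Relation.ReflTransGen (fun a b => 0 < w b a) s i)
    (K : Matrix {i : Fin (n + 1) // i ≠ s} {i : Fin (n + 1) // i ≠ s} ℝ)
    (hK : ∀ i k, K i k = L i.1 k.1) :
    IsUnit K.det := by
  rw [isUnit_iff_ne_zero]
  intro hdet
  obtain ⟨v, hv, hKv⟩ := (Matrix.exists_mulVec_eq_zero_iff).mpr hdet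
  set y : Fin (n + 1) → ℝ := fun i => if h : i = s then 0 else v ⟨i, h⟩ with hy
  have hys : y s = 0 := by simp [hy]
  have key : ∀ i : Fin (n + 1), i ≠ s → (∑ m, w i m) * y i = ∑ k, w i k * y k := by
    intro i hi
    have h0 : ∑ k : {i : Fin (n + 1) // i ≠ s}, L i k.1 * v k = 0 := by
      have := congrFun hKv ⟨i, hi⟩
      simpa [Matrix.mulVec, dotProduct, hK] using this
    have hmem : ∀ x : Fin (n + 1), x ∈ ({s}ᶜ : Finset (Fin (n + 1))) ↔ x ≠ s := by
      intro x; simp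
    have hsub := Finset.sum_subtype (s := ({s}ᶜ : Finset (Fin (n + 1))))
      (p := fun k => k ≠ s) (F := by infer_instance) hmem (f := fun k => L i k * y k)
    have h1 : ∑ k : {i : Fin (n + 1) // i ≠ s}, L i k.1 * v k
        = ∑ k ∈ ({s}ᶜ : Finset (Fin (n + 1))), L i k * y k := by
      rw [hsub]
      apply Finset.sum_congr rfl
      intro k _
      simp [hy, k.2]
    have h2 : ∑ k, L i k * y k = 0 := by
      have := Finset.add_sum_erase Finset.univ (fun k => L i k * y k) (Finset.mem_univ s)
      have herase : (Finset.univ.erase s) = ({s}ᶜ : Finset (Fin (n + 1))) := by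
        ext k; simp [Finset.mem_erase]
      rw [← this, herase, ← h1, h0]
      simp [hys]
    have h3 : ∀ k, L i k * y k
        = (if k = i then (∑ m, w i m) * y i else 0) - w i k * y k := by
      intro k
      rw [hL]
      by_cases hk : k = i
      · subst hk
        simp [hwdiag]
      · rw [if_neg hk, if_neg hk]
        ring
    have h4 : ∑ k, L i k * y k = (∑ m, w i m) * y i - ∑ k, w i k * y k := by
      simp only [h3, Finset.sum_sub_distrib, Finset.sum_ite_eq' Finset.univ i,
        Finset.mem_univ, if_true]
    rw [h4] at h2
    linarith
  have prop : ∀ (z : Fin (n + 1) → ℝ),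
      (∀ i, i ≠ s → (∑ m, w i m) * z i = ∑ k, w i k * z k) →
      ∀ M, (∀ k, z k ≤ M) →
      ∀ i, Relation.ReflTransGen (fun a b => 0 < w b a) s i → z i = M → z s = M := by
    intro z hz M hM i hri
    induction hri with
    | refl => exact id
    | @tail b c hsb hbc ih =>
      intro hc
      by_cases hcs : c = s
      · rw [← hcs]; exact hc
      · have hSz := hz c hcs
        have hS : 0 < ∑ m, w c m :=
          lt_of_lt_of_le hbc (Finset.single_le_sum (fun k _ => hw c k) (Finset.mem_univ b))
        have hsum0 : ∑ k, w c k * (M - z k) = 0 := by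
          have hexp : ∑ k, w c k * (M - z k)
              = (∑ m, w c m) * M - ∑ k, w c k * z k := by
            simp [mul_sub, Finset.sum_sub_distrib, ← Finset.sum_mul]
          rw [hexp, ← hSz, hc]
          ring
        have hb : w c b * (M - z b) = 0 :=
          (Finset.sum_eq_zero_iff_of_nonneg
            (fun k _ => mul_nonneg (hw c k) (sub_nonneg.2 (hM k)))).1 hsum0 b
            (Finset.mem_univ b)
        have hzb : z b = M := by
          rcases mul_eq_zero.1 hb with h | h
          · exact absurd h (ne_of_gt hbc)
          · linarith [sub_eq_zero.1 h]
        exact ih hzb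
  -- max
  obtain ⟨i0, hi0⟩ := Finite.exists_max y
  have hmax0 : y i0 = 0 := by
    have := prop y key (y i0) hi0 i0 (hreach i0) rfl
    rw [hys] at this
    linarith
  have hle : ∀ k, y k ≤ 0 := fun k => hmax0 ▸ hi0 k
  -- min (apply to -y)
  have keyneg : ∀ i : Fin (n + 1), i ≠ s →
      (∑ m, w i m) * (-y) i = ∑ k, w i k * (-y) k := by
    intro i hi
    have hki := key i hi
    simp only [Pi.neg_apply, mul_neg]
    rw [Finset.sum_neg_distrib, hki]
  obtain ⟨i1, hi1⟩ := Finite.exists_max (-y)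
  have hmin0 : (-y) i1 = 0 := by
    have := prop (-y) keyneg ((-y) i1) hi1 i1 (hreach i1) rfl
    simp only [Pi.neg_apply, hys, neg_zero] at this
    simp only [Pi.neg_apply]
    linarith
  have hge : ∀ k, 0 ≤ y k := by
    intro k
    have := hi1 k
    rw [hmin0] at this
    simpa using this
  apply hv
  funext j
  have h1 : y j.1 = v j := by simp [hy, j.2]
  have := le_antisymm (hle j.1) (hge j.1)
  rw [h1] at this
  simpa using this
end

section
/- Every eigenvalue of the pinned Laplacian K has strictly positive real part; in particular, -K is Hurwitz. -/
/-! By Gershgorin, every eigenvalue `μ` of `K` lies in a disc centred at a diagonal entry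
`K i i` whose radius `∑_{j ≠ i} |K i j| = -∑_{j ≠ i} K i j` is at most `K i i` by the
nonnegative row sums. Such a disc touches the imaginary axis only at `0`, and `0` is not an
eigenvalue because `K` is invertible. -/

open Finset

namespace Matrix

variable {n : Type*} [Fintype n] [DecidableEq n]

theorem exists_norm_sub_diag_le_of_mulVec_eq_smul {𝕜 : Type*} [NormedField 𝕜]
    {A : Matrix n n 𝕜} {μ : 𝕜} {v : n → 𝕜} (hv : v ≠ 0) (heig : A *ᵥ v = μ • v) :
    ∃ i, ‖μ - A i i‖ ≤ ∑ j ∈ univ.erase i, ‖A i j‖ := by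
  have hμ : Module.End.HasEigenvalue (toLin' A) μ :=
    Module.End.hasEigenvalue_of_hasEigenvector
      ⟨Module.End.mem_eigenspace_iff.mpr (by rw [toLin'_apply, heig]), hv⟩
  simpa only [Metric.mem_closedBall, dist_eq_norm] using eigenvalue_mem_ball hμ

theorem ne_zero_of_mulVec_eq_smul {𝕜 : Type*} [Field 𝕜] {A : Matrix n n 𝕜} (hA : A.det ≠ 0)
    {μ : 𝕜} {v : n → 𝕜} (hv : v ≠ 0) (heig : A *ᵥ v = μ • v) : μ ≠ 0 := by
  rintro rfl
  exact hA (exists_mulVec_eq_zero_iff.mp ⟨v, hv, by rwa [zero_smul] at heig⟩)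

theorem sum_abs_offDiag_le_diag {K : Matrix n n ℝ} (hoff : ∀ i k, k ≠ i → K i k ≤ 0)
    (hrow : ∀ i, 0 ≤ ∑ k, K i k) (i : n) :
    ∑ j ∈ univ.erase i, |K i j| ≤ K i i := by
  have habs : ∑ j ∈ univ.erase i, |K i j| = -∑ j ∈ univ.erase i, K i j := by
    rw [← sum_neg_distrib]
    exact sum_congr rfl fun j hj ↦ abs_of_nonpos (hoff i j (ne_of_mem_erase hj))
  have := hrow i
  rw [← add_sum_erase _ _ (mem_univ i)] at this
  linarith

end Matrix

theorem Complex.re_pos_of_norm_sub_ofReal_le {μ : ℂ} {d : ℝ} (hμ : ‖μ - d‖ ≤ d) (h0 : μ ≠ 0) :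
    0 < μ.re := by
  have hd : 0 ≤ d := (norm_nonneg _).trans hμ
  have hsq : (μ.re - d) ^ 2 + μ.im ^ 2 ≤ d ^ 2 := by
    have := pow_le_pow_left₀ (norm_nonneg _) hμ 2
    rwa [Complex.sq_norm, Complex.normSq_apply, sub_re, sub_im, ofReal_re, ofReal_im,
      sub_zero, ← sq, ← sq] at this
  by_contra! hre
  have him : μ.im = 0 := by nlinarith
  have hre0 : μ.re = 0 := by nlinarith
  exact h0 (Complex.ext hre0 him)

/-- Every eigenvalue of the pinned Laplacian `K` (diagonally dominant with nonpositive
off-diagonal entries, nonnegative row sums, and invertible) has strictly positive real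
part; in particular `-K` is Hurwitz. -/
theorem stmt_1 (n : ℕ) (K : Matrix (Fin n) (Fin n) ℝ)
    (hoff : ∀ i k, k ≠ i → K i k ≤ 0)
    (hrow : ∀ i, 0 ≤ ∑ k, K i k)
    (hinv : IsUnit K.det)
    (μ : ℂ) (v : Fin n → ℂ) (hv : v ≠ 0)
    (heig : (K.map (Complex.ofReal)).mulVec v = μ • v) :
    0 < μ.re := by
  have hdet : (K.map Complex.ofReal).det ≠ 0 :=
    (Complex.ofRealHom.map_det K).symm ▸ Complex.ofReal_ne_zero.mpr hinv.ne_zero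
  obtain ⟨i, hi⟩ := Matrix.exists_norm_sub_diag_le_of_mulVec_eq_smul hv heig
  simp only [Matrix.map_apply, Complex.norm_real, Real.norm_eq_abs] at hi
  exact Complex.re_pos_of_norm_sub_ofReal_le
    (hi.trans (Matrix.sum_abs_offDiag_le_diag hoff hrow i))
    (Matrix.ne_zero_of_mulVec_eq_smul hdet hv heig)
end

section
/- Suppose λ is a complex number with Re(λ) > 0, β > 1/Re(λ), α > 0, τ > 0, and |βλ - 1| - (βRe(λ) - 1) < ατβRe(λ). Then every root s of the equation s + αβλ - (1/τ)(1 - βλ)(1 - e^{-sτ}) = 0 has Re(s) < 0. -/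
/-!
If `Re s ≥ 0` then `|e^{-sτ}| ≤ 1`, so `(1 - βλ)(1 - e^{-sτ})` lies in the closed disk of radius
`|1 - βλ|` about `1 - βλ`, and its real part is at most `|βλ - 1| - (β Re λ - 1)`. Multiplying the
equation by `τ`, the hypothesis on `|βλ - 1|` then forces `τ Re s < 0`, a contradiction.
-/

theorem Complex.norm_exp_neg_mul_ofReal_le_one {s : ℂ} {τ : ℝ} (hs : 0 ≤ s.re) (hτ : 0 ≤ τ) :
    ‖Complex.exp (-(s * τ))‖ ≤ 1 := by
  rw [Complex.norm_exp, Real.exp_le_one_iff]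
  simpa [Complex.mul_re] using mul_nonneg hs hτ

theorem Complex.re_mul_one_sub_le {a E : ℂ} (hE : ‖E‖ ≤ 1) :
    (a * (1 - E)).re ≤ a.re + ‖a‖ := by
  have h : (-(a * E)).re ≤ ‖a‖ := calc
    _ ≤ ‖-(a * E)‖ := Complex.re_le_norm _
    _ = ‖a‖ * ‖E‖ := by rw [norm_neg, norm_mul]
    _ ≤ ‖a‖ := mul_le_of_le_one_right (norm_nonneg a) hE
  rw [mul_one_sub, sub_eq_add_neg, Complex.add_re]
  linarith

theorem stmt_12_general (lam : ℂ) (α β τ : ℝ) (hτ : 0 < τ)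
    (hcond : ‖(β : ℂ) * lam - 1‖ - (β * lam.re - 1) < α * τ * β * lam.re)
    (s : ℂ)
    (hroot : s + (α : ℂ) * β * lam
      - (1 / (τ : ℂ)) * (1 - (β : ℂ) * lam) * (1 - Complex.exp (-(s * τ))) = 0) :
    s.re < 0 := by
  by_contra! hs
  have hτ' : (τ : ℂ) ≠ 0 := Complex.ofReal_ne_zero.mpr hτ.ne'
  have hscaled : (τ : ℂ) * s = (1 - β * lam) * (1 - Complex.exp (-(s * τ)))
      - ((α * τ * β : ℝ) : ℂ) * lam := by
    field_simp at hroot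
    push_cast
    linear_combination hroot
  have hre : τ * s.re
      = ((1 - β * lam) * (1 - Complex.exp (-(s * τ)))).re - α * τ * β * lam.re := by
    simpa using congrArg Complex.re hscaled
  have hdisk := Complex.re_mul_one_sub_le (a := 1 - β * lam)
    (Complex.norm_exp_neg_mul_ofReal_le_one hs hτ.le)
  rw [norm_sub_rev] at hdisk
  have hcenter : (1 - (β : ℂ) * lam).re = 1 - β * lam.re := by simp
  have hneg : τ * s.re < 0 := by linarith
  exact hneg.not_ge (mul_nonneg hτ.le hs)

/-- If `λ` has positive real part, `β > 1/Re λ`, `α, τ > 0`, and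
`|βλ - 1| - (β Re λ - 1) < ατβ Re λ`, then every root `s` of
`s + αβλ - (1/τ)(1 - βλ)(1 - e^{-sτ}) = 0` has negative real part. -/
theorem stmt_12 (lam : ℂ) (α β τ : ℝ) (hre : 0 < lam.re)
    (hβ : 1 / lam.re < β) (hα : 0 < α) (hτ : 0 < τ)
    (hcond : ‖(β : ℂ) * lam - 1‖ - (β * lam.re - 1) < α * τ * β * lam.re)
    (s : ℂ)
    (hroot : s + (α : ℂ) * β * lam
      - (1 / (τ : ℂ)) * (1 - (β : ℂ) * lam) * (1 - Complex.exp (-(s * τ))) = 0) :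
    s.re < 0 :=
  stmt_12_general lam α β τ hτ hcond s hroot
end

section
/- For β m cos φ > 1 with m > 0 and 0 ≤ φ < π/2, the quantity tan ψ = β m sin φ/(β m cos φ - 1) is nonincreasing in m and nondecreasing in φ, while ρ² = β²m² - 2βm cos φ + 1 is nondecreasing in both m and φ. -/
open Set Real

/-- For `β m cos φ > 1` with `m > 0` and `0 ≤ φ < π/2`, the quantity
`tan ψ = β m sin φ / (β m cos φ - 1)` is nonincreasing in `m` and nondecreasing
in `φ`, while `ρ² = β²m² - 2βm cos φ + 1` is nondecreasing in both `m` and `φ`. -/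
theorem stmt_15 (β : ℝ) (hβ : 0 < β) :
    (∀ φ ∈ Ico (0 : ℝ) (π / 2), ∀ m₁ m₂ : ℝ, 0 < m₁ → m₁ ≤ m₂ →
      1 < β * m₁ * Real.cos φ →
      β * m₂ * Real.sin φ / (β * m₂ * Real.cos φ - 1)
        ≤ β * m₁ * Real.sin φ / (β * m₁ * Real.cos φ - 1)) ∧
    (∀ m : ℝ, 0 < m → ∀ φ₁ ∈ Ico (0 : ℝ) (π / 2), ∀ φ₂ ∈ Ico (0 : ℝ) (π / 2),
      φ₁ ≤ φ₂ → 1 < β * m * Real.cos φ₂ →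
      β * m * Real.sin φ₁ / (β * m * Real.cos φ₁ - 1)
        ≤ β * m * Real.sin φ₂ / (β * m * Real.cos φ₂ - 1)) ∧
    (∀ φ ∈ Ico (0 : ℝ) (π / 2), ∀ m₁ m₂ : ℝ, 0 < m₁ → m₁ ≤ m₂ →
      1 < β * m₁ * Real.cos φ →
      β ^ 2 * m₁ ^ 2 - 2 * β * m₁ * Real.cos φ + 1
        ≤ β ^ 2 * m₂ ^ 2 - 2 * β * m₂ * Real.cos φ + 1) ∧
    (∀ m : ℝ, 0 < m → ∀ φ₁ ∈ Ico (0 : ℝ) (π / 2), ∀ φ₂ ∈ Ico (0 : ℝ) (π / 2),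
      φ₁ ≤ φ₂ →
      β ^ 2 * m ^ 2 - 2 * β * m * Real.cos φ₁ + 1
        ≤ β ^ 2 * m ^ 2 - 2 * β * m * Real.cos φ₂ + 1) := by
  refine ⟨?_, ?_, ?_, ?_⟩
  · intro φ hφ m₁ m₂ hm₁ hm hlt
    have hs : 0 ≤ Real.sin φ := Real.sin_nonneg_of_nonneg_of_le_pi hφ.1
      (le_trans hφ.2.le (by linarith [Real.pi_pos]))
    have hd1 : 0 < β * m₁ * Real.cos φ - 1 := by linarith
    have hd2 : 0 < β * m₂ * Real.cos φ - 1 := by nlinarith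
    rw [div_le_div_iff₀ hd2 hd1]
    nlinarith [mul_nonneg hs (mul_nonneg hβ.le (sub_nonneg.2 hm))]
  · intro m hm φ₁ hφ₁ φ₂ hφ₂ hφ hlt
    have hcos : Real.cos φ₂ ≤ Real.cos φ₁ :=
      Real.cos_le_cos_of_nonneg_of_le_pi hφ₁.1
        (le_trans hφ₂.2.le (by linarith [Real.pi_pos])) hφ
    have hsin : Real.sin φ₁ ≤ Real.sin φ₂ :=
      Real.sin_le_sin_of_le_of_le_pi_div_two (by linarith [Real.pi_pos, hφ₁.1])
        hφ₂.2.le hφ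
    have hs2 : 0 ≤ Real.sin φ₂ := Real.sin_nonneg_of_nonneg_of_le_pi hφ₂.1
      (le_trans hφ₂.2.le (by linarith [Real.pi_pos]))
    have hd2 : 0 < β * m * Real.cos φ₂ - 1 := by linarith
    have hA : 0 < β * m := mul_pos hβ hm
    have hc : β * m * Real.cos φ₂ ≤ β * m * Real.cos φ₁ :=
      mul_le_mul_of_nonneg_left hcos hA.le
    have hd1 : 0 < β * m * Real.cos φ₁ - 1 := by linarith
    rw [div_le_div_iff₀ hd1 hd2]
    nlinarith [mul_le_mul_of_nonneg_left hsin hA.le,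
      mul_nonneg (mul_nonneg hA.le hs2) (sub_nonneg.2 hc)]
  · intro φ hφ m₁ m₂ hm₁ hm hlt
    have hc1 : Real.cos φ ≤ 1 := Real.cos_le_one φ
    have hc0 : 0 ≤ Real.cos φ := Real.cos_nonneg_of_mem_Icc
      ⟨by linarith [hφ.1, Real.pi_pos], hφ.2.le⟩
    have hc0' : 0 < Real.cos φ := by nlinarith [mul_pos hβ hm₁]
    have hkey : Real.cos φ < β * m₁ := by
      nlinarith [mul_le_mul hc1 hc1 hc0 zero_le_one]
    have h2 : 0 ≤ β * (m₁ + m₂) - 2 * Real.cos φ := by nlinarith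
    nlinarith [mul_nonneg (mul_nonneg hβ.le (sub_nonneg.2 hm)) h2]
  · intro m hm φ₁ hφ₁ φ₂ hφ₂ hφ
    have hcos : Real.cos φ₂ ≤ Real.cos φ₁ :=
      Real.cos_le_cos_of_nonneg_of_le_pi hφ₁.1
        (le_trans hφ₂.2.le (by linarith [Real.pi_pos])) hφ
    nlinarith [mul_le_mul_of_nonneg_left hcos (mul_pos hβ hm).le]
end

section
/- If λ = m e^{jφ} with β m cos φ > 1, then |βλ/(1 - βλ)| > 1; moreover |βλ/(1-βλ)|² is nonincreasing in m > 0 and nonincreasing in φ ∈ [0, φ̄] (where β m cos φ̄ > 1), so |βλ/(1-βλ)| ≥ β m̄ / sqrt(β² m̄² - 2β m̄ cos φ̄ + 1) for m ≤ m̄ and φ ≤ φ̄. -/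
open Real

/-
Write `z = βλ = a e^{iφ}` with `a = βm` and `c = cos φ`. Then `‖1 - z‖² = a² - 2ac + 1`, so
`‖z/(1-z)‖² = a²/(a² - 2ac + 1)`, which exceeds `1` exactly when `2ac > 1`. As a function of
`t = 1/a` the denominator over `a²` is `t² - 2ct + 1`, decreasing for `t < c`, i.e. for `ac > 1`;
so the ratio decreases in `a` there. It increases in `c` for `a > 0`, and `cos` decreases on
`[0, π/2)`. Chaining both monotonicities from `(m, φ)` to `(m̄, φ̄)` gives the lower bound.
-/

theorem Complex.sq_norm_one_sub (z : ℂ) : ‖1 - z‖ ^ 2 = ‖z‖ ^ 2 - 2 * z.re + 1 := by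
  rw [Complex.sq_norm, Complex.sq_norm, Complex.normSq_sub]
  simp only [map_one, one_mul, Complex.conj_re]
  ring

theorem Complex.sq_norm_div_one_sub (z : ℂ) :
    ‖z / (1 - z)‖ ^ 2 = ‖z‖ ^ 2 / (‖z‖ ^ 2 - 2 * z.re + 1) := by
  rw [norm_div, div_pow, Complex.sq_norm_one_sub]

noncomputable def ratioSq (a c : ℝ) : ℝ := a ^ 2 / (a ^ 2 - 2 * a * c + 1)

theorem sq_norm_div_one_sub_ofReal_mul_exp (a φ : ℝ) :
    ‖(a : ℂ) * Complex.exp (φ * Complex.I) / (1 - a * Complex.exp (φ * Complex.I))‖ ^ 2 =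
      ratioSq a (cos φ) := by
  rw [Complex.sq_norm_div_one_sub, norm_mul, Complex.norm_exp_ofReal_mul_I, mul_one,
    Complex.norm_real, Real.norm_eq_abs, sq_abs, Complex.re_ofReal_mul,
    Complex.exp_ofReal_mul_I_re, ratioSq, mul_assoc]

theorem ratioSq_mul (β m c : ℝ) :
    β ^ 2 * m ^ 2 / (β ^ 2 * m ^ 2 - 2 * β * m * c + 1) = ratioSq (β * m) c := by
  rw [ratioSq]; ring

section ratioSq

variable {a c : ℝ}

theorem ratioSq_denom_pos (ha : 0 < a) (hc : c ≤ 1) (h : 1 < a * c) :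
    0 < a ^ 2 - 2 * a * c + 1 := by
  nlinarith [mul_nonneg ha.le (sub_nonneg.2 hc)]

theorem one_lt_ratioSq (ha : 0 < a) (hc : c ≤ 1) (h : 1 < a * c) : 1 < ratioSq a c := by
  rw [ratioSq, one_lt_div (ratioSq_denom_pos ha hc h)]
  linarith

theorem ratioSq_le_ratioSq_of_le_left {a₁ a₂ : ℝ} (hc : c ≤ 1) (ha₁ : 0 < a₁)
    (h : 1 < a₁ * c) (h12 : a₁ ≤ a₂) : ratioSq a₂ c ≤ ratioSq a₁ c := by
  have ha₂ : 0 < a₂ := ha₁.trans_le h12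
  have h₂ : 1 < a₂ * c := by nlinarith
  rw [ratioSq, ratioSq, div_le_div_iff₀ (ratioSq_denom_pos ha₂ hc h₂)
    (ratioSq_denom_pos ha₁ hc h)]
  have key : 0 ≤ (a₂ - a₁) * (a₁ * (a₂ * c - 1) + a₂ * (a₁ * c - 1)) :=
    mul_nonneg (by linarith) (by nlinarith)
  nlinarith

theorem ratioSq_le_ratioSq_of_le_right {c₁ c₂ : ℝ} (ha : 0 ≤ a)
    (hD : 0 < a ^ 2 - 2 * a * c₁ + 1) (h12 : c₂ ≤ c₁) : ratioSq a c₂ ≤ ratioSq a c₁ :=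
  div_le_div_of_nonneg_left (sq_nonneg a) hD (by nlinarith)

theorem ratioSq_le_ratioSq_of_le_of_le {a' c' : ℝ} (ha : 0 < a) (hc : c ≤ 1)
    (h : 1 < a * c) (haa' : a ≤ a') (hc'c : c' ≤ c) : ratioSq a' c' ≤ ratioSq a c :=
  have ha' : 0 < a' := ha.trans_le haa'
  have hc0 : 0 < c := pos_of_mul_pos_right (one_pos.trans h) ha.le
  calc ratioSq a' c'
      ≤ ratioSq a' c := ratioSq_le_ratioSq_of_le_right ha'.le
        (ratioSq_denom_pos ha' hc (h.trans_le (by gcongr))) hc'c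
    _ ≤ ratioSq a c := ratioSq_le_ratioSq_of_le_left hc ha h haa'

theorem div_sqrt_eq_sqrt_ratioSq (ha : 0 ≤ a) :
    a / √(a ^ 2 - 2 * a * c + 1) = √(ratioSq a c) := by
  rw [ratioSq, Real.sqrt_div (sq_nonneg a), Real.sqrt_sq ha]

end ratioSq

theorem stmt_16_general (β m mbar φ φbar : ℝ) (hβ : 0 < β)
    (hmbar : m ≤ mbar) (hφ0 : 0 ≤ φ) (hφ : φ ≤ φbar) (hφbar : φbar < π / 2)
    (hc : 1 < β * m * Real.cos φ)
    (lam : ℂ) (hlam : lam = (m : ℂ) * Complex.exp ((φ : ℂ) * Complex.I)) :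
    (1 < ‖(β : ℂ) * lam / (1 - (β : ℂ) * lam)‖) ∧
    (∀ m₁ m₂ : ℝ, 0 < m₁ → m₁ ≤ m₂ → 1 < β * m₁ * Real.cos φ →
      β ^ 2 * m₂ ^ 2 / (β ^ 2 * m₂ ^ 2 - 2 * β * m₂ * Real.cos φ + 1)
        ≤ β ^ 2 * m₁ ^ 2 / (β ^ 2 * m₁ ^ 2 - 2 * β * m₁ * Real.cos φ + 1)) ∧
    (∀ φ₁ φ₂ : ℝ, 0 ≤ φ₁ → φ₁ ≤ φ₂ → φ₂ ≤ φbar → 1 < β * m * Real.cos φ₂ →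
      β ^ 2 * m ^ 2 / (β ^ 2 * m ^ 2 - 2 * β * m * Real.cos φ₂ + 1)
        ≤ β ^ 2 * m ^ 2 / (β ^ 2 * m ^ 2 - 2 * β * m * Real.cos φ₁ + 1)) ∧
    (β * mbar / Real.sqrt (β ^ 2 * mbar ^ 2 - 2 * β * mbar * Real.cos φbar + 1)
      ≤ ‖(β : ℂ) * lam / (1 - (β : ℂ) * lam)‖) := by
  have hcos_le_cos {x y : ℝ} (hx : 0 ≤ x) (hxy : x ≤ y) (hy : y ≤ φbar) : cos y ≤ cos x :=
    cos_le_cos_of_nonneg_of_le_pi hx (by linarith [pi_pos]) hxy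
  have hcos : 0 < cos φ := cos_pos_of_mem_Ioo ⟨by linarith [pi_pos], by linarith⟩
  have ha : 0 < β * m := pos_of_mul_pos_left (one_pos.trans hc) hcos.le
  have hA : ‖(β : ℂ) * lam / (1 - (β : ℂ) * lam)‖ ^ 2 = ratioSq (β * m) (cos φ) := by
    rw [← sq_norm_div_one_sub_ofReal_mul_exp, hlam, Complex.ofReal_mul, mul_assoc]
  refine ⟨?_, ?_, ?_, ?_⟩
  · exact (one_lt_sq_iff₀ (norm_nonneg _)).1 (hA ▸ one_lt_ratioSq ha (cos_le_one φ) hc)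
  · intro m₁ m₂ hm₁ h12 hc₁
    rw [ratioSq_mul, ratioSq_mul]
    exact ratioSq_le_ratioSq_of_le_left (cos_le_one φ) (mul_pos hβ hm₁) hc₁
      (mul_le_mul_of_nonneg_left h12 hβ.le)
  · intro φ₁ φ₂ h0 h12 h2 hc₂
    have hcos12 := hcos_le_cos h0 h12 h2
    rw [ratioSq_mul, ratioSq_mul]
    exact ratioSq_le_ratioSq_of_le_right ha.le
      (ratioSq_denom_pos ha (cos_le_one φ₁) (hc₂.trans_le (by gcongr))) hcos12
  · have hmm : β * m ≤ β * mbar := mul_le_mul_of_nonneg_left hmbar hβ.le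
    have hDbar : β ^ 2 * mbar ^ 2 - 2 * β * mbar * cos φbar + 1 =
        (β * mbar) ^ 2 - 2 * (β * mbar) * cos φbar + 1 := by ring
    rw [← Real.sqrt_sq (norm_nonneg _), hA, hDbar, div_sqrt_eq_sqrt_ratioSq (ha.trans_le hmm).le]
    exact Real.sqrt_le_sqrt
      (ratioSq_le_ratioSq_of_le_of_le ha (cos_le_one φ) hc hmm (hcos_le_cos hφ0 hφ le_rfl))

/-- If `λ = m e^{jφ}` with `β m cos φ > 1`, then `|βλ/(1-βλ)| > 1`; its square
`β²m²/(β²m² - 2βm cos φ + 1)` is nonincreasing in `m` and in `φ`, so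
`|βλ/(1-βλ)| ≥ β m̄ /√(β²m̄² - 2βm̄ cos φ̄ + 1)` for `m ≤ m̄` and `φ ≤ φ̄`. -/
theorem stmt_16 (β m mbar φ φbar : ℝ) (hβ : 0 < β) (hm : 0 < m)
    (hmbar : m ≤ mbar) (hφ0 : 0 ≤ φ) (hφ : φ ≤ φbar) (hφbar : φbar < π / 2)
    (hc : 1 < β * m * Real.cos φ) (hcbar : 1 < β * mbar * Real.cos φbar)
    (lam : ℂ) (hlam : lam = (m : ℂ) * Complex.exp ((φ : ℂ) * Complex.I)) :
    (1 < ‖(β : ℂ) * lam / (1 - (β : ℂ) * lam)‖) ∧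
    (∀ m₁ m₂ : ℝ, 0 < m₁ → m₁ ≤ m₂ → 1 < β * m₁ * Real.cos φ →
      β ^ 2 * m₂ ^ 2 / (β ^ 2 * m₂ ^ 2 - 2 * β * m₂ * Real.cos φ + 1)
        ≤ β ^ 2 * m₁ ^ 2 / (β ^ 2 * m₁ ^ 2 - 2 * β * m₁ * Real.cos φ + 1)) ∧
    (∀ φ₁ φ₂ : ℝ, 0 ≤ φ₁ → φ₁ ≤ φ₂ → φ₂ ≤ φbar → 1 < β * m * Real.cos φ₂ →
      β ^ 2 * m ^ 2 / (β ^ 2 * m ^ 2 - 2 * β * m * Real.cos φ₂ + 1)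
        ≤ β ^ 2 * m ^ 2 / (β ^ 2 * m ^ 2 - 2 * β * m * Real.cos φ₁ + 1)) ∧
    (β * mbar / Real.sqrt (β ^ 2 * mbar ^ 2 - 2 * β * mbar * Real.cos φbar + 1)
      ≤ ‖(β : ℂ) * lam / (1 - (β : ℂ) * lam)‖) :=
  stmt_16_general β m mbar φ φbar hβ hmbar hφ0 hφ hφbar hc lam hlam
end

section
/- Let ε > 1, α > 0, r ≥ 2 an integer, and define H(s) = ε|s + α|^r - |s|^r for s = a + jb with a ≥ 0. Then H(s) is positive, nondecreasing in b² and strictly increasing in a, and satisfies H(s) > ε α^r for all s with Re(s) ≥ 0. -/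
/-!
Write `s = a + jb`, `p = r / 2` and `f t = t ^ p`, so that `H s = ε f((a + α)² + b²) - f(a² + b²)`
with `f` convex and increasing on `[0, ∞)`. Raising `b²` shifts both arguments of `f` by the same
amount, raising `a` shifts the larger one by more; by convexity the larger argument gains at least
as much as the smaller one, and the factor `ε ≥ 1` only amplifies that. For the lower
bound, `|s + α|² ≥ |s|² + α²` on the half-plane and superadditivity of `f` give
`H s ≥ ε α ^ r + (ε - 1) |s| ^ r`.
-/

open Set

theorem ConvexOn.map_add_map_le_of_add_eq {𝕜 : Type*} [Field 𝕜] [LinearOrder 𝕜]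
    [IsStrictOrderedRing 𝕜] {s : Set 𝕜} {f : 𝕜 → 𝕜} (hf : ConvexOn 𝕜 s f) {a b x y : 𝕜}
    (ha : a ∈ s) (hb : b ∈ s) (hx : x ∈ Icc a b) (hxy : x + y = a + b) :
    f x + f y ≤ f a + f b := by
  rcases hx.1.eq_or_lt with rfl | hax
  · rw [add_left_cancel hxy]
  rcases hx.2.eq_or_lt with rfl | hxb
  · rw [show y = a by linear_combination hxy, add_comm]
  have hx' := hf.secant_mono_aux1 ha hb hax hxb
  have hy' := hf.secant_mono_aux1 ha hb (show a < y by linarith) (show y < b by linarith)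
  have hba : 0 < b - a := by linarith
  rw [show y = a + b - x by linear_combination hxy] at hy' ⊢
  nlinarith

theorem ConvexOn.smul_map_sub_map_le_of_sub_eq {𝕜 : Type*} [Field 𝕜] [LinearOrder 𝕜]
    [IsStrictOrderedRing 𝕜] {s : Set 𝕜} {f : 𝕜 → 𝕜} (hf : ConvexOn 𝕜 s f)
    (hmono : MonotoneOn f s) {ε u v u' v' : 𝕜} (hε : 1 ≤ ε) (hu : u ∈ s) (hv : v ∈ s)
    (hv' : v' ∈ s) (huv : u ≤ v) (huu' : u ≤ u') (hshift : u' - u = v' - v) :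
    ε * f v - f u ≤ ε * f v' - f u' := by
  have hconvex : f u' + f v ≤ f u + f v' :=
    hf.map_add_map_le_of_add_eq hu hv' ⟨huu', by linarith⟩ (by linarith)
  have hvv' : f v ≤ f v' := hmono hv hv' (by linarith)
  nlinarith

theorem one_le_natCast_div_two {r : ℕ} (hr : 2 ≤ r) : 1 ≤ (r : ℝ) / 2 := by
  rw [le_div_iff₀ two_pos, one_mul]
  exact_mod_cast hr

theorem pow_eq_sq_rpow_half {x : ℝ} (hx : 0 ≤ x) (r : ℕ) : x ^ r = (x ^ 2) ^ ((r : ℝ) / 2) := by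
  rw [← Real.rpow_natCast_mul hx, Nat.cast_ofNat, mul_div_cancel₀ _ two_ne_zero,
    Real.rpow_natCast]

theorem sq_norm_mk_add_ofReal (a b α : ℝ) : ‖(⟨a, b⟩ : ℂ) + α‖ ^ 2 = (a + α) ^ 2 + b ^ 2 := by
  rw [Complex.sq_norm, Complex.normSq_apply]
  simp only [Complex.add_re, Complex.add_im, Complex.ofReal_re, Complex.ofReal_im, add_zero]
  ring

theorem sq_add_sq_norm_le_sq_norm_add_ofReal {s : ℂ} {α : ℝ} (hs : 0 ≤ s.re) (hα : 0 ≤ α) :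
    α ^ 2 + ‖s‖ ^ 2 ≤ ‖s + α‖ ^ 2 := by
  have hs' : s = ⟨s.re, s.im⟩ := rfl
  rw [hs', sq_norm_mk_add_ofReal, Complex.sq_norm, Complex.normSq_mk]
  nlinarith [mul_nonneg hs hα]

theorem pow_add_norm_pow_le_norm_add_ofReal_pow {s : ℂ} {α : ℝ} {r : ℕ} (hs : 0 ≤ s.re)
    (hα : 0 ≤ α) (hr : 2 ≤ r) : α ^ r + ‖s‖ ^ r ≤ ‖s + α‖ ^ r := by
  rw [pow_eq_sq_rpow_half hα r, pow_eq_sq_rpow_half (norm_nonneg s) r,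
    pow_eq_sq_rpow_half (norm_nonneg (s + α)) r]
  calc (α ^ 2) ^ ((r : ℝ) / 2) + (‖s‖ ^ 2) ^ ((r : ℝ) / 2)
      ≤ (α ^ 2 + ‖s‖ ^ 2) ^ ((r : ℝ) / 2) :=
        Real.add_rpow_le_rpow_add (by positivity) (by positivity) (one_le_natCast_div_two hr)
    _ ≤ (‖s + α‖ ^ 2) ^ ((r : ℝ) / 2) :=
      Real.rpow_le_rpow (by positivity) (sq_add_sq_norm_le_sq_norm_add_ofReal hs hα) (by positivity)

-- `H (a + jb) = powGap ε α (r / 2) a (b ^ 2)`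
noncomputable def powGap (ε α p a c : ℝ) : ℝ := ε * ((a + α) ^ 2 + c) ^ p - (a ^ 2 + c) ^ p

section powGap

variable {ε α p : ℝ} (hε : 1 ≤ ε) (hp : 1 ≤ p)
include hε hp

theorem powGap_le_powGap_right {a c₁ c₂ : ℝ} (hα : 0 ≤ α) (ha : 0 ≤ a) (hc₁ : 0 ≤ c₁)
    (hc : c₁ ≤ c₂) :
    powGap ε α p a c₁ ≤ powGap ε α p a c₂ :=
  (convexOn_rpow hp).smul_map_sub_map_le_of_sub_eq
    (Real.monotoneOn_rpow_Ici_of_exponent_nonneg (by linarith)) hε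
    (mem_Ici.2 (by positivity)) (mem_Ici.2 (by positivity)) (mem_Ici.2 (by nlinarith))
    (by nlinarith) (by linarith) (by ring)

theorem powGap_lt_powGap_left {a₁ a₂ c : ℝ} (hα : 0 < α) (ha₁ : 0 ≤ a₁) (hc : 0 ≤ c)
    (ha : a₁ < a₂) : powGap ε α p a₁ c < powGap ε α p a₂ c := by
  set v' := (a₁ + α) ^ 2 + (a₂ ^ 2 - a₁ ^ 2) + c
  have hshift : ε * ((a₁ + α) ^ 2 + c) ^ p - (a₁ ^ 2 + c) ^ p ≤ ε * v' ^ p - (a₂ ^ 2 + c) ^ p :=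
    (convexOn_rpow hp).smul_map_sub_map_le_of_sub_eq
      (Real.monotoneOn_rpow_Ici_of_exponent_nonneg (by linarith)) hε
      (mem_Ici.2 (by positivity)) (mem_Ici.2 (by positivity)) (mem_Ici.2 (by nlinarith))
      (by nlinarith) (by nlinarith) (by ring)
  have hv' : v' ^ p < ((a₂ + α) ^ 2 + c) ^ p :=
    Real.rpow_lt_rpow (by nlinarith) (by nlinarith) (by linarith)
  unfold powGap
  nlinarith

end powGap

/-- For `ε > 1`, `α > 0`, integer `r ≥ 2`, the function
`H(s) = ε|s + α|^r - |s|^r` on the closed right half-plane is positive,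
nondecreasing in `b²` (where `s = a + jb`), strictly increasing in `a`, and
bounded below by `ε α^r` (strictly so for `s ≠ 0`). -/
theorem stmt_18 (ε α : ℝ) (r : ℕ) (hε : 1 < ε) (hα : 0 < α) (hr : 2 ≤ r)
    (H : ℂ → ℝ)
    (hH : ∀ s : ℂ, H s = ε * ‖s + (α : ℂ)‖ ^ r - ‖s‖ ^ r) :
    (∀ s : ℂ, 0 ≤ s.re → 0 < H s) ∧
    (∀ a b₁ b₂ : ℝ, 0 ≤ a → b₁ ^ 2 ≤ b₂ ^ 2 →
      H (Complex.mk a b₁) ≤ H (Complex.mk a b₂)) ∧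
    (∀ a₁ a₂ b : ℝ, 0 ≤ a₁ → a₁ < a₂ →
      H (Complex.mk a₁ b) < H (Complex.mk a₂ b)) ∧
    (∀ s : ℂ, 0 ≤ s.re → ε * α ^ r ≤ H s) ∧
    (∀ s : ℂ, 0 ≤ s.re → s ≠ 0 → ε * α ^ r < H s) := by
  have hp := one_le_natCast_div_two hr
  have hH_eq_powGap (a b : ℝ) : H ⟨a, b⟩ = powGap ε α ((r : ℝ) / 2) a (b ^ 2) := by
    rw [hH, pow_eq_sq_rpow_half (norm_nonneg _) r, pow_eq_sq_rpow_half (norm_nonneg _) r,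
      sq_norm_mk_add_ofReal, Complex.sq_norm, Complex.normSq_mk, powGap]
    ring_nf
  have hlower (s : ℂ) (hs : 0 ≤ s.re) : ε * α ^ r + (ε - 1) * ‖s‖ ^ r ≤ H s := by
    have := pow_add_norm_pow_le_norm_add_ofReal_pow hs hα.le hr
    rw [hH]
    nlinarith
  have hεα : 0 < ε * α ^ r := by positivity
  have hslack (s : ℂ) : 0 ≤ (ε - 1) * ‖s‖ ^ r := mul_nonneg (by linarith) (by positivity)
  refine ⟨fun s hs ↦ ?_, fun a b₁ b₂ ha hb ↦ ?_, fun a₁ a₂ b ha₁ ha ↦ ?_,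
    fun s hs ↦ ?_, fun s hs hs₀ ↦ ?_⟩
  · linarith [hlower s hs, hslack s]
  · rw [hH_eq_powGap, hH_eq_powGap]
    exact powGap_le_powGap_right hε.le hp hα.le ha (sq_nonneg b₁) hb
  · rw [hH_eq_powGap, hH_eq_powGap]
    exact powGap_lt_powGap_left hε.le hp hα ha₁ (sq_nonneg b) ha
  · linarith [hlower s hs, hslack s]
  · have : 0 < (ε - 1) * ‖s‖ ^ r := mul_pos (by linarith) (pow_pos (norm_pos_iff.2 hs₀) r)
    linarith [hlower s hs]
end

section
/- Suppose ε_λ > 0, α > 0, τ > 0, r ≥ 1, λ ∈ C with Re(λ) > 0 and βRe(λ) > 1, P(s) = (s+α)^r, F a function on the closed right half-plane with sup_{Re(s)≥0} |F(s)| < ε_λ α^r, and |βλ/(1-βλ)| ≥ ε_λ with ε_λ > 1 when r ≥ 2 (or |βRe(λ)/(1-βλ)| ≥ ε_λ when r = 1). Then the equation s^r + (βλ/(1-βλ)) P(s) = F(s) has no root s with Re(s) ≥ 0. -/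
/-! Write `c = βλ/(1-βλ)`. For `r ≥ 2` and `Re s ≥ 0` we have `|s|² + α² ≤ |s+α|²`, hence
`|s|^r + α^r ≤ |s+α|^r`, and the reverse triangle inequality gives
`|s^r + c(s+α)^r| ≥ ε|s+α|^r - |s|^r ≥ (ε-1)|s|^r + εα^r ≥ εα^r` as `ε > 1`.
For `r = 1` the left-hand side equals `(s + βλα)/(1-βλ)`, whose numerator has real part
at least `β Re(λ) α`. Either way the left-hand side is at least `εα^r > |F s|`. -/

open Complex

lemma pow_add_pow_le_of_sq_add_sq_le {x a A : ℝ} (hx : 0 ≤ x) (ha : 0 ≤ a) (hA : 0 ≤ A)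
    (h : x ^ 2 + a ^ 2 ≤ A ^ 2) {n : ℕ} (hn : 2 ≤ n) : x ^ n + a ^ n ≤ A ^ n := by
  obtain ⟨k, rfl⟩ := Nat.exists_eq_add_of_le' hn
  have hxk : x ^ k ≤ A ^ k := pow_le_pow_left₀ hx (by nlinarith) k
  have hak : a ^ k ≤ A ^ k := pow_le_pow_left₀ ha (by nlinarith) k
  calc x ^ (k + 2) + a ^ (k + 2) = x ^ k * x ^ 2 + a ^ k * a ^ 2 := by ring
    _ ≤ A ^ k * x ^ 2 + A ^ k * a ^ 2 := by gcongr
    _ = A ^ k * (x ^ 2 + a ^ 2) := by ring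
    _ ≤ A ^ k * A ^ 2 := by gcongr
    _ = A ^ (k + 2) := by ring

lemma sq_norm_add_sq_le_sq_norm_add_ofReal {s : ℂ} (hs : 0 ≤ s.re) {a : ℝ} (ha : 0 ≤ a) :
    ‖s‖ ^ 2 + a ^ 2 ≤ ‖s + a‖ ^ 2 := by
  simp only [Complex.sq_norm, normSq_apply, add_re, add_im, ofReal_re, ofReal_im]
  nlinarith

lemma norm_pow_add_pow_le_norm_add_ofReal_pow {s : ℂ} (hs : 0 ≤ s.re) {a : ℝ} (ha : 0 ≤ a)
    {n : ℕ} (hn : 2 ≤ n) : ‖s‖ ^ n + a ^ n ≤ ‖s + a‖ ^ n :=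
  pow_add_pow_le_of_sq_add_sq_le (norm_nonneg s) ha (norm_nonneg _)
    (sq_norm_add_sq_le_sq_norm_add_ofReal hs ha) hn

lemma mul_pow_le_norm_pow_add_mul_add_ofReal_pow {s c : ℂ} (hs : 0 ≤ s.re) {a ε : ℝ}
    (ha : 0 ≤ a) (hε : 1 ≤ ε) (hc : ε ≤ ‖c‖) {n : ℕ} (hn : 2 ≤ n) :
    ε * a ^ n ≤ ‖s ^ n + c * (s + a) ^ n‖ := by
  have hsup := norm_pow_add_pow_le_norm_add_ofReal_pow hs ha hn
  have hcA : ε * ‖s + a‖ ^ n ≤ ‖c * (s + a) ^ n‖ := by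
    rw [norm_mul, norm_pow]; gcongr
  have hrev : ‖c * (s + a) ^ n‖ - ‖s ^ n‖ ≤ ‖s ^ n + c * (s + a) ^ n‖ := by
    simpa [add_comm] using norm_sub_norm_le (c * (s + a) ^ n) (-(s ^ n))
  rw [norm_pow] at hrev
  nlinarith [pow_nonneg (norm_nonneg s) n]

lemma one_sub_ne_zero_of_one_lt_re {z : ℂ} (hz : 1 < z.re) : 1 - z ≠ 0 := by
  intro h
  have := congrArg re h
  simp only [sub_re, one_re, zero_re] at this
  linarith

lemma mul_le_norm_add_div_one_sub_mul_add_ofReal {s z : ℂ} (hs : 0 ≤ s.re) (hz : 1 - z ≠ 0)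
    {a ε : ℝ} (ha : 0 ≤ a) (hε : ε ≤ z.re / ‖1 - z‖) :
    ε * a ≤ ‖s + z / (1 - z) * (s + a)‖ := by
  have hnorm : 0 < ‖1 - z‖ := norm_pos_iff.mpr hz
  have hrw : s + z / (1 - z) * (s + a) = (s + z * a) / (1 - z) := by
    field_simp; ring
  have hre : z.re * a ≤ ‖s + z * a‖ := by
    refine le_trans ?_ (re_le_norm _)
    simp only [add_re, re_mul_ofReal]
    linarith
  rw [hrw, norm_div, le_div_iff₀ hnorm]
  calc ε * a * ‖1 - z‖ = ε * ‖1 - z‖ * a := by ring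
    _ ≤ z.re * a := by gcongr; exact (le_div_iff₀ hnorm).mp hε
    _ ≤ ‖s + z * a‖ := hre

theorem stmt_19_general (β α εlam : ℝ) (r : ℕ) (hr : 1 ≤ r)
    (hα : 0 < α)
    (lam : ℂ) (hβre : 1 < β * lam.re)
    (F : ℂ → ℂ)
    (hF : ∀ s : ℂ, 0 ≤ s.re → ‖F s‖ < εlam * α ^ r)
    (hεr2 : 2 ≤ r → 1 < εlam ∧ εlam ≤ ‖(β : ℂ) * lam / (1 - (β : ℂ) * lam)‖)
    (hεr1 : r = 1 → εlam ≤ β * lam.re / ‖1 - (β : ℂ) * lam‖) :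
    ∀ s : ℂ, 0 ≤ s.re →
      s ^ r + ((β : ℂ) * lam / (1 - (β : ℂ) * lam)) * (s + (α : ℂ)) ^ r ≠ F s := by
  intro s hs heq
  have hzre : ((β : ℂ) * lam).re = β * lam.re := re_ofReal_mul β lam
  suffices εlam * α ^ r ≤ ‖F s‖ from (hF s hs).not_ge this
  rw [← heq]
  rcases hr.eq_or_lt with rfl | hr2
  · simp only [pow_one]
    exact mul_le_norm_add_div_one_sub_mul_add_ofReal hs
      (one_sub_ne_zero_of_one_lt_re (hzre ▸ hβre)) hα.le (hzre ▸ hεr1 rfl)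
  · obtain ⟨hε1, hεc⟩ := hεr2 hr2
    exact mul_pow_le_norm_pow_add_mul_add_ofReal_pow hs hα.le hε1.le hεc hr2

/-- Suppose `ε_λ > 0`, `α, τ > 0`, `r ≥ 1`, `λ` has `Re λ > 0` and `β Re λ > 1`,
`P(s) = (s+α)^r`, `F` satisfies `sup_{Re s ≥ 0} |F s| < ε_λ α^r`, and
`|βλ/(1-βλ)| ≥ ε_λ` with `ε_λ > 1` when `r ≥ 2` (or `β Re λ/|1-βλ| ≥ ε_λ` when
`r = 1`).  Then `s^r + (βλ/(1-βλ)) P(s) = F(s)` has no root with `Re s ≥ 0`. -/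
theorem stmt_19 (β α τ εlam : ℝ) (r : ℕ) (hr : 1 ≤ r)
    (hβ : 0 < β) (hα : 0 < α) (hτ : 0 < τ) (hε : 0 < εlam)
    (lam : ℂ) (hre : 0 < lam.re) (hβre : 1 < β * lam.re)
    (F : ℂ → ℂ)
    (hF : ∀ s : ℂ, 0 ≤ s.re → ‖F s‖ < εlam * α ^ r)
    (hεr2 : 2 ≤ r → 1 < εlam ∧ εlam ≤ ‖(β : ℂ) * lam / (1 - (β : ℂ) * lam)‖)
    (hεr1 : r = 1 → εlam ≤ β * lam.re / ‖1 - (β : ℂ) * lam‖) :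
    ∀ s : ℂ, 0 ≤ s.re →
      s ^ r + ((β : ℂ) * lam / (1 - (β : ℂ) * lam)) * (s + (α : ℂ)) ^ r ≠ F s :=
  stmt_19_general β α εlam r hr hα lam hβre F hF hεr2 hεr1
end
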